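/- arXiv:2211.14265 — 2 statements merged into one kernel-verified Lean document; each statement's English description precedes it below -/
import Mathlib

section
/- Let S ⊆ V be a linear subspace, τ > 0, and let (u^n)_{n≥0} be a sequence in S satisfying the Galerkin scheme ⟨M (u^{n+1} − 2u^n + u^{n−1})/τ² + K (u^{n+1} + 2u^n + u^{n−1})/4, v⟩ = 0 for every v ∈ S and every n ≥ 1. Then for every n ≥ 0, |∂_t u^n|_M² + |u^{n+1/2}|_K² = |∂_t u^0|_M² + |u^{1/2}|_K². -/
open scoped RealInnerProductSpace

/-- The (semi)norm `|v|_A := ⟨A v, v⟩^{1/2}` induced by a linear operator `A`. -/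
noncomputable def opSemiNorm {V : Type*} [NormedAddCommGroup V] [InnerProductSpace ℝ V]
    (A : V →ₗ[ℝ] V) (v : V) : ℝ :=
  Real.sqrt ⟪A v, v⟫

private lemma cross_sub {V : Type*} [NormedAddCommGroup V] [InnerProductSpace ℝ V]
    (A : V →ₗ[ℝ] V) (hA : ∀ x y : V, ⟪A x, y⟫ = ⟪x, A y⟫) (x y : V) :
    ⟪A (x - y), x + y⟫ = ⟪A x, x⟫ - ⟪A y, y⟫ := by
  have h : ⟪A x, y⟫ = ⟪A y, x⟫ := by rw [hA x y, real_inner_comm]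
  simp only [map_sub, inner_sub_left, inner_add_right]
  linarith

private lemma cross_add {V : Type*} [NormedAddCommGroup V] [InnerProductSpace ℝ V]
    (A : V →ₗ[ℝ] V) (hA : ∀ x y : V, ⟪A x, y⟫ = ⟪x, A y⟫) (x y : V) :
    ⟪A (x + y), x - y⟫ = ⟪A x, x⟫ - ⟪A y, y⟫ := by
  have h : ⟪A x, y⟫ = ⟪A y, x⟫ := by rw [hA x y, real_inner_comm]
  simp only [map_add, inner_add_left, inner_sub_right]
  linarith

/-- discrete energy conservation for the homogeneous Galerkin scheme
in a subspace `S` (the localized multiscale space of the paper). -/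
theorem stmt4 {V : Type*} [NormedAddCommGroup V] [InnerProductSpace ℝ V]
    [FiniteDimensional ℝ V]
    (M K : V →ₗ[ℝ] V)
    (hMsa : ∀ x y : V, ⟪M x, y⟫ = ⟪x, M y⟫)
    (hMpd : ∀ x : V, x ≠ 0 → 0 < ⟪M x, x⟫)
    (hKsa : ∀ x y : V, ⟪K x, y⟫ = ⟪x, K y⟫)
    (hKpsd : ∀ x : V, 0 ≤ ⟪K x, x⟫)
    (S : Submodule ℝ V)
    (τ : ℝ) (hτ : 0 < τ) (u : ℕ → V) (hu : ∀ n, u n ∈ S)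
    (hscheme : ∀ n : ℕ, 1 ≤ n → ∀ v ∈ S,
      ⟪M ((τ ^ 2)⁻¹ • (u (n + 1) - (2 : ℝ) • u n + u (n - 1))) +
        K ((4 : ℝ)⁻¹ • (u (n + 1) + (2 : ℝ) • u n + u (n - 1))), v⟫ = 0) :
    ∀ n : ℕ,
      opSemiNorm M (τ⁻¹ • (u (n + 1) - u n)) ^ 2 +
          opSemiNorm K ((2 : ℝ)⁻¹ • (u (n + 1) + u n)) ^ 2 =
        opSemiNorm M (τ⁻¹ • (u 1 - u 0)) ^ 2 +
          opSemiNorm K ((2 : ℝ)⁻¹ • (u 1 + u 0)) ^ 2 := by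
  have hMnn : ∀ x : V, 0 ≤ ⟪M x, x⟫ := by
    intro x
    by_cases hx : x = 0
    · simp [hx]
    · exact (hMpd x hx).le
  -- energy functional
  set F : ℕ → ℝ := fun n =>
    (τ ^ 2)⁻¹ * ⟪M (u (n + 1) - u n), u (n + 1) - u n⟫ +
      (4 : ℝ)⁻¹ * ⟪K (u (n + 1) + u n), u (n + 1) + u n⟫ with hF
  -- each term rewrites to F
  have hrw : ∀ n : ℕ,
      opSemiNorm M (τ⁻¹ • (u (n + 1) - u n)) ^ 2 +
        opSemiNorm K ((2 : ℝ)⁻¹ • (u (n + 1) + u n)) ^ 2 = F n := by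
    intro n
    have h1 : ⟪M (τ⁻¹ • (u (n + 1) - u n)), τ⁻¹ • (u (n + 1) - u n)⟫ =
        (τ ^ 2)⁻¹ * ⟪M (u (n + 1) - u n), u (n + 1) - u n⟫ := by
      rw [map_smul, real_inner_smul_left, real_inner_smul_right]
      ring
    have h2 : ⟪K ((2 : ℝ)⁻¹ • (u (n + 1) + u n)), (2 : ℝ)⁻¹ • (u (n + 1) + u n)⟫ =
        (4 : ℝ)⁻¹ * ⟪K (u (n + 1) + u n), u (n + 1) + u n⟫ := by
      rw [map_smul, real_inner_smul_left, real_inner_smul_right]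
      ring
    rw [hF]
    simp only [opSemiNorm]
    rw [Real.sq_sqrt (hMnn _), Real.sq_sqrt (hKpsd _), h1, h2]
  -- conservation step
  have hstep : ∀ n : ℕ, F (n + 1) = F n := by
    intro n
    have hv : u (n + 2) - u n ∈ S := S.sub_mem (hu _) (hu _)
    have h := hscheme (n + 1) (Nat.le_add_left 1 n) (u (n + 2) - u n) hv
    simp only [Nat.add_sub_cancel] at h
    have e1 : u (n + 1 + 1) - (2 : ℝ) • u (n + 1) + u n =
        (u (n + 2) - u (n + 1)) - (u (n + 1) - u n) := by
      rw [two_smul]; abel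
    have e2 : u (n + 1 + 1) + (2 : ℝ) • u (n + 1) + u n =
        (u (n + 2) + u (n + 1)) + (u (n + 1) + u n) := by
      rw [two_smul]; abel
    have e3 : u (n + 2) - u n =
        (u (n + 2) - u (n + 1)) + (u (n + 1) - u n) := by abel
    have e4 : u (n + 2) - u n =
        (u (n + 2) + u (n + 1)) - (u (n + 1) + u n) := by abel
    rw [inner_add_left, e1, e2, map_smul, map_smul, real_inner_smul_left,
      real_inner_smul_left] at h
    nth_rewrite 1 [e3] at h
    rw [e4] at h
    rw [cross_sub M hMsa, cross_add K hKsa] at h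
    rw [hF]
    show (τ ^ 2)⁻¹ * ⟪M (u (n + 2) - u (n + 1)), u (n + 2) - u (n + 1)⟫ +
        (4 : ℝ)⁻¹ * ⟪K (u (n + 2) + u (n + 1)), u (n + 2) + u (n + 1)⟫ = _
    linarith
  have hF0 : ∀ n : ℕ, F n = F 0 := by
    intro n
    induction n with
    | zero => rfl
    | succ m ih => rw [hstep m, ih]
  intro n
  rw [hrw n, hrw 0, hF0 n]
end

section
/- Let V be a finite-dimensional real inner product space, M, K : V → V self-adjoint with M positive definite and K positive semidefinite. Let S ⊆ V be a subspace and R : V → S a linear map with the Galerkin property ⟨K (R v − v), s⟩ = 0 for all v ∈ V, s ∈ S. Let T > 0, N ≥ 2, τ := T/N, t_n := n τ. Let f : [0,T] → V be C² and u : [0,T] → V be C⁴ with M u''(t) + K u(t) = M f(t) on [0,T]. Assume there are constants C_R, H > 0 with, for all t ∈ [0,T]: (i) |R u(t) − u(t)|_K ≤ C_R H (|f(t) − u''(t)|_M + |u(t)|_K); (ii) |R u''(t) − u''(t)|_M ≤ C_R H |u''(t)|_K; and (iii) |R u'(t) − u'(t)|_M ≤ C_R H |u'(t)|_K. Let (u^n)_{n=0}^N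 ⊂ S satisfy ⟨M (u^{n+1} − 2u^n + u^{n−1})/τ² + K (u^{n+1} + 2u^n + u^{n−1})/4 − M f(t_n), v⟩ = 0 for all v ∈ S and 1 ≤ n ≤ N−1. Then there is a constant C depending only on C_R such that max_{1≤n≤N−1} |(u^{n+1} − u^n)/τ − u'(t_n + τ/2)|_M ≤ C [ |(u^1 − u^0)/τ − R((u(t_1) − u(t_0))/τ)|_M + |(u^1 + u^0)/2 − R((u(t_1) + u(t_0))/2)|_K + τ² ( ∫₀^T |u''''(s)|_M ds + ∫₀^T |f''(s)|_M ds + H ∫₀^T |u''(s)|_K ds + sup_{[0,T]} |u'''|_M ) + H ( (T + τ) sup_{[0,T]} |u''|_K + sup_{[0,T]} |u'|_K ) ]. -/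
open scoped RealInnerProductSpace

/-!
Write `U n = e n + R (u (n τ))`. Galerkin orthogonality of `R` and the equation turn the scheme
into the same scheme for `e`, driven by the consistency error of `R ∘ u`. Testing it with
`e (n + 1) - e (n - 1)` shows that the discrete energy
`√(|(e (n + 1) - e n) / τ|_M² + |(e (n + 1) + e n) / 2|_K²)` grows by at most `τ` times the
`M`-norm of that defect in each step. Taylor's formula with integral remainder bounds the defect
by `τ` times the integrals of `|u''''|_M` and `|f''|_M` over two time steps, plus the Ritz error
(ii) of `u''`; summing over the steps gives the `τ²` and `H T sup |u''|_K` terms. Finally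
`(U (n + 1) - U n) / τ - u' (t_n + τ / 2)` is the discrete derivative of `e`, plus the difference
quotient of the Ritz error of `u` (bounded through (iii)), plus a midpoint-rule error of order
`τ² sup |u'''|_M`.
-/

open intervalIntegral MeasureTheory

theorem le_add_of_sq_sub_sq_le_mul_add {x y c : ℝ} (hy : 0 ≤ y) (hc : 0 ≤ c)
    (h : x ^ 2 - y ^ 2 ≤ c * (x + y)) : x ≤ y + c := by
  nlinarith

theorem le_ciSup_Icc_of_continuous {φ : ℝ → ℝ} (hφ : Continuous φ) {a b s : ℝ}
    (hs : s ∈ Set.Icc a b) : φ s ≤ ⨆ t : Set.Icc a b, φ t := by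
  have hbdd := (isCompact_Icc (a := a) (b := b)).bddAbove_image hφ.continuousOn
  rw [Set.image_eq_range] at hbdd
  exact le_ciSup hbdd ⟨s, hs⟩

theorem integral_le_mul_of_forall_le {φ : ℝ → ℝ} {a b B : ℝ} (hab : a ≤ b) (hφ : Continuous φ)
    (hB : ∀ s ∈ Set.Icc a b, φ s ≤ B) : ∫ s in a..b, φ s ≤ (b - a) * B := by
  simpa [mul_comm] using integral_mono_on hab (hφ.intervalIntegrable a b)
    (intervalIntegrable_const (μ := volume)) hB

theorem abs_pow_succ_mul_integral_comp_add_mul {φ : ℝ → ℝ} (hφ : ∀ s, 0 ≤ φ s) (n : ℕ)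
    (t h : ℝ) :
    |h| ^ (n + 1) * ∫ s in (0 : ℝ)..1, φ (t + s * h) = |h| ^ n * |∫ s in t..t + h, φ s| := by
  have hnonneg : 0 ≤ ∫ s in (0 : ℝ)..1, φ (t + s * h) :=
    integral_nonneg zero_le_one fun s _ => hφ _
  have hsubst : h * ∫ s in (0 : ℝ)..1, φ (t + s * h) = ∫ s in t..t + h, φ s := by
    simp [mul_comm]
  rw [← hsubst, abs_mul, abs_of_nonneg hnonneg, pow_succ]
  ring

theorem abs_integral_add_abs_integral_eq_integral {φ : ℝ → ℝ} (hφ : Continuous φ)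
    (hφ0 : ∀ s, 0 ≤ φ s) {h : ℝ} (hh : 0 ≤ h) (t : ℝ) :
    |∫ s in t..t + h, φ s| + |∫ s in t..t - h, φ s| = ∫ s in t - h..t + h, φ s := by
  rw [integral_symm (t - h), abs_neg,
    abs_of_nonneg (integral_nonneg (by linarith) fun s _ => hφ0 s),
    abs_of_nonneg (integral_nonneg (by linarith) fun s _ => hφ0 s), add_comm,
    integral_add_adjacent_intervals (hφ.intervalIntegrable _ _) (hφ.intervalIntegrable _ _)]

theorem sum_integral_two_steps_le {φ : ℝ → ℝ} (hφ : Continuous φ) (hφ0 : ∀ s, 0 ≤ φ s)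
    {τ T : ℝ} (hτ : 0 ≤ τ) {n : ℕ} (hnT : (n + 1) * τ ≤ T) :
    ∑ m ∈ Finset.range n, ∫ s in ((m + 1 : ℕ) : ℝ) * τ - τ..((m + 1 : ℕ) : ℝ) * τ + τ, φ s ≤
      2 * ∫ s in (0 : ℝ)..T, φ s := by
  have hint : ∀ a b : ℝ, IntervalIntegrable φ volume a b :=
    fun a b => hφ.intervalIntegrable a b
  have hsplit : ∀ m : ℕ, ∫ s in ((m + 1 : ℕ) : ℝ) * τ - τ..((m + 1 : ℕ) : ℝ) * τ + τ, φ s =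
      (∫ s in (m : ℝ) * τ..((m + 1 : ℕ) : ℝ) * τ, φ s) +
        ∫ s in ((m + 1 : ℕ) : ℝ) * τ..((m + 1 + 1 : ℕ) : ℝ) * τ, φ s := fun m => by
    rw [integral_add_adjacent_intervals (hint _ _) (hint _ _)]
    push_cast
    ring_nf
  have hsub : ∀ a b : ℝ, 0 ≤ a → a ≤ b → b ≤ T → ∫ s in a..b, φ s ≤ ∫ s in (0 : ℝ)..T, φ s :=
    fun a b ha hab hbT => integral_mono_interval ha hab hbT
      (Filter.Eventually.of_forall hφ0) (hint 0 T)
  rw [Finset.sum_congr rfl fun m _ => hsplit m, Finset.sum_add_distrib,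
    sum_integral_adjacent_intervals fun k _ => hint _ _,
    sum_integral_adjacent_intervals (a := fun k : ℕ => ((k + 1 : ℕ) : ℝ) * τ) fun k _ => hint _ _]
  have h1 : (n : ℝ) * τ ≤ T := by nlinarith
  push_cast at hnT ⊢
  linarith [hsub (0 * τ) (n * τ) (by simp) (by rw [zero_mul]; positivity) h1,
    hsub (1 * τ) ((n + 1) * τ) (by positivity) (by nlinarith) hnT]

theorem Icc_window_subset_Icc {τ T : ℝ} (hτ : 0 ≤ τ) {m n : ℕ} (hm : m < n)
    (hnT : (n + 1) * τ ≤ T) :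
    Set.Icc (((m + 1 : ℕ) : ℝ) * τ - τ) (((m + 1 : ℕ) : ℝ) * τ + τ) ⊆ Set.Icc 0 T := by
  intro s hs
  have hmn : (m : ℝ) + 2 ≤ n + 1 := by exact_mod_cast (show m + 2 ≤ n + 1 by omega)
  have : ((m : ℝ) + 2) * τ ≤ T := le_trans (by gcongr) hnT
  push_cast at hs
  constructor <;> nlinarith [hs.1, hs.2]

section IteratedDeriv

variable {𝕜 : Type*} [NontriviallyNormedField 𝕜] {F : Type*} [NormedAddCommGroup F]
  [NormedSpace 𝕜 F]

theorem iteratedDeriv_iteratedDeriv (m k : ℕ) (u : 𝕜 → F) :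
    iteratedDeriv m (iteratedDeriv k u) = iteratedDeriv (m + k) u := by
  simp only [iteratedDeriv_eq_iterate, Function.iterate_add_apply]

theorem ContDiff.iteratedDeriv_of_add {m k : ℕ} {u : 𝕜 → F} (hu : ContDiff 𝕜 (m + k : ℕ) u) :
    ContDiff 𝕜 m (iteratedDeriv k u) := by
  rw [iteratedDeriv_eq_iterate]
  exact ContDiff.iterate_deriv' m k hu

theorem ContinuousLinearMap.iteratedDeriv_comp_left {E : Type*} [NormedAddCommGroup E]
    [NormedSpace 𝕜 E] (L : F →L[𝕜] E) {u : 𝕜 → F} {n : WithTop ℕ∞} (hu : ContDiff 𝕜 n u) {k : ℕ}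
    (hk : k ≤ n) (t : 𝕜) : iteratedDeriv k (fun s => L (u s)) t = L (iteratedDeriv k u t) := by
  simp only [iteratedDeriv_eq_iteratedFDeriv]
  exact congrArg (· fun _ => 1) (L.iteratedFDeriv_comp_left hu.contDiffAt hk)

end IteratedDeriv

section Seminorm

variable {V : Type*} [NormedAddCommGroup V] [InnerProductSpace ℝ V] {A : V →ₗ[ℝ] V}

theorem opSemiNorm_nonneg (A : V →ₗ[ℝ] V) (v : V) : 0 ≤ opSemiNorm A v :=
  Real.sqrt_nonneg _

theorem sq_opSemiNorm (hA : A.IsPositive) (v : V) : opSemiNorm A v ^ 2 = ⟪A v, v⟫ :=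
  Real.sq_sqrt (hA.inner_nonneg_left v)

theorem opSemiNorm_smul (A : V →ₗ[ℝ] V) (c : ℝ) (v : V) :
    opSemiNorm A (c • v) = |c| * opSemiNorm A v := by
  rw [opSemiNorm, opSemiNorm, map_smul, real_inner_smul_left, real_inner_smul_right, ← mul_assoc,
    Real.sqrt_mul (mul_self_nonneg c), Real.sqrt_mul_self_eq_abs]

theorem opSemiNorm_neg (A : V →ₗ[ℝ] V) (v : V) : opSemiNorm A (-v) = opSemiNorm A v := by
  simpa using opSemiNorm_smul A (-1) v

theorem inner_le_opSemiNorm_mul_opSemiNorm (hA : A.IsPositive) (x y : V) :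
    ⟪A x, y⟫ ≤ opSemiNorm A x * opSemiNorm A y := by
  have hsymm : ⟪A y, x⟫ = ⟪A x, y⟫ := by rw [hA.isSymmetric, real_inner_comm]
  have hquad : ∀ c : ℝ, 0 ≤ ⟪A y, y⟫ * (c * c) + 2 * ⟪A x, y⟫ * c + ⟪A x, x⟫ := fun c => by
    have := hA.inner_nonneg_left (x + c • y)
    simp only [map_add, map_smul, inner_add_left, inner_add_right, real_inner_smul_left,
      real_inner_smul_right, hsymm] at this
    linarith
  have hdisc := discrim_le_zero hquad
  rw [discrim] at hdisc
  refine abs_le_of_sq_le_sq' ?_ (mul_nonneg (opSemiNorm_nonneg A x) (opSemiNorm_nonneg A y)) |>.2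
  rw [mul_pow, sq_opSemiNorm hA, sq_opSemiNorm hA]
  nlinarith

theorem opSemiNorm_add_le (hA : A.IsPositive) (x y : V) :
    opSemiNorm A (x + y) ≤ opSemiNorm A x + opSemiNorm A y := by
  refine abs_le_of_sq_le_sq' ?_ (add_nonneg (opSemiNorm_nonneg A x) (opSemiNorm_nonneg A y)) |>.2
  have hsymm : ⟪A y, x⟫ = ⟪A x, y⟫ := by rw [hA.isSymmetric, real_inner_comm]
  rw [add_sq, sq_opSemiNorm hA, sq_opSemiNorm hA, sq_opSemiNorm hA]
  simp only [map_add, inner_add_left, inner_add_right, hsymm]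
  linarith [inner_le_opSemiNorm_mul_opSemiNorm hA x y]

theorem opSemiNorm_sub_le (hA : A.IsPositive) (x y : V) :
    opSemiNorm A (x - y) ≤ opSemiNorm A x + opSemiNorm A y := by
  simpa [sub_eq_add_neg, opSemiNorm_neg] using opSemiNorm_add_le hA x (-y)

theorem LinearMap.IsSymmetric.inner_map_add_sub (hA : A.IsSymmetric) (a b : V) :
    ⟪A (a + b), a - b⟫ = ⟪A a, a⟫ - ⟪A b, b⟫ := by
  have hsymm : ⟪A b, a⟫ = ⟪A a, b⟫ := by rw [hA, real_inner_comm]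
  simp only [map_add, inner_add_left, inner_sub_right, hsymm]
  ring

end Seminorm

section Calculus

variable {V : Type*} [NormedAddCommGroup V] [InnerProductSpace ℝ V] [FiniteDimensional ℝ V]
  {A : V →ₗ[ℝ] V}

@[fun_prop]
theorem continuous_opSemiNorm (A : V →ₗ[ℝ] V) : Continuous (opSemiNorm A) :=
  Real.continuous_sqrt.comp (A.continuous_of_finiteDimensional.inner continuous_id)

theorem opSemiNorm_integral_le (hA : A.IsPositive) {a b : ℝ} (hab : a ≤ b) {w : ℝ → V}
    (hw : Continuous w) :
    opSemiNorm A (∫ s in a..b, w s) ≤ ∫ s in a..b, opSemiNorm A (w s) := by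
  set I := ∫ s in a..b, w s
  rcases (opSemiNorm_nonneg A I).eq_or_lt with h0 | h0
  · rw [← h0]
    exact integral_nonneg hab fun s _ => opSemiNorm_nonneg A (w s)
  have hsq : opSemiNorm A I ^ 2 ≤ opSemiNorm A I * ∫ s in a..b, opSemiNorm A (w s) := by
    calc opSemiNorm A I ^ 2 = ∫ s in a..b, ⟪A I, w s⟫ := by
          rw [sq_opSemiNorm hA]
          exact ((innerSL ℝ (A I)).intervalIntegral_comp_comm (hw.intervalIntegrable a b)).symm
      _ ≤ ∫ s in a..b, opSemiNorm A I * opSemiNorm A (w s) := by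
          refine integral_mono_on hab (Continuous.intervalIntegrable (by fun_prop) _ _)
            (Continuous.intervalIntegrable (by fun_prop) _ _) fun s _ => ?_
          exact inner_le_opSemiNorm_mul_opSemiNorm hA _ _
      _ = opSemiNorm A I * ∫ s in a..b, opSemiNorm A (w s) := integral_const_mul _ _
  nlinarith

theorem opSemiNorm_sub_taylorWithinEval_le (hA : A.IsPositive) {g : ℝ → V} {n : ℕ}
    (hg : ContDiff ℝ (n + 1) g) (t h : ℝ) :
    opSemiNorm A (g (t + h) - taylorWithinEval g n Set.univ t (t + h)) ≤
      |h| ^ n / n.factorial * |∫ s in t..t + h, opSemiNorm A (iteratedDeriv (n + 1) g s)| := by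
  have hremainder := map_add_eq_sum_add_integral_iteratedFDeriv (f := g) (x := t) (y := h)
    (n := n) (fun s _ => hg.contDiffAt)
  simp only [iteratedFDeriv_apply_eq_iteratedDeriv_mul_prod, Finset.prod_const,
    Finset.card_univ, Fintype.card_fin, smul_eq_mul, smul_smul] at hremainder
  rw [taylor_within_apply]
  simp only [iteratedDerivWithin_univ, add_sub_cancel_left]
  rw [hremainder, add_sub_cancel_left, opSemiNorm_smul, abs_of_nonneg (by positivity),
    div_mul_eq_mul_div, inv_mul_eq_div,
    ← abs_pow_succ_mul_integral_comp_add_mul (fun s => opSemiNorm_nonneg A _)]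
  gcongr
  calc opSemiNorm A (∫ s in (0 : ℝ)..1, ((1 - s) ^ n * h ^ (n + 1)) •
        iteratedDeriv (n + 1) g (t + s * h))
      ≤ ∫ s in (0 : ℝ)..1, opSemiNorm A (((1 - s) ^ n * h ^ (n + 1)) •
        iteratedDeriv (n + 1) g (t + s * h)) :=
        opSemiNorm_integral_le hA zero_le_one (by fun_prop)
    _ ≤ ∫ s in (0 : ℝ)..1, |h| ^ (n + 1) * opSemiNorm A (iteratedDeriv (n + 1) g (t + s * h)) := by
        refine integral_mono_on zero_le_one (Continuous.intervalIntegrable (by fun_prop) _ _)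
          (Continuous.intervalIntegrable (by fun_prop) _ _) fun s hs => ?_
        rw [opSemiNorm_smul, abs_mul, abs_pow, abs_pow, abs_of_nonneg (sub_nonneg.2 hs.2)]
        have : (1 - s) ^ n ≤ 1 := pow_le_one₀ (by linarith [hs.2]) (by linarith [hs.1])
        exact mul_le_mul_of_nonneg_right (mul_le_of_le_one_left (by positivity) this)
          (opSemiNorm_nonneg _ _)
    _ = |h| ^ (n + 1) * ∫ s in (0 : ℝ)..1, opSemiNorm A (iteratedDeriv (n + 1) g (t + s * h)) :=
        integral_const_mul _ _

theorem opSemiNorm_taylor_remainders_le (hA : A.IsPositive) {g : ℝ → V} {n : ℕ}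
    (hg : ContDiff ℝ (n + 1) g) (t : ℝ) {h : ℝ} (hh : 0 ≤ h) :
    opSemiNorm A (g (t + h) - taylorWithinEval g n Set.univ t (t + h)) +
        opSemiNorm A (g (t - h) - taylorWithinEval g n Set.univ t (t - h)) ≤
      h ^ n / n.factorial * ∫ s in t - h..t + h, opSemiNorm A (iteratedDeriv (n + 1) g s) := by
  have hplus := opSemiNorm_sub_taylorWithinEval_le hA hg t h
  have hminus := opSemiNorm_sub_taylorWithinEval_le hA hg t (-h)
  rw [← sub_eq_add_neg, abs_neg] at hminus
  rw [← abs_integral_add_abs_integral_eq_integral (by fun_prop) (fun s => opSemiNorm_nonneg A _)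
    hh t,
    mul_add]
  rw [abs_of_nonneg hh] at hplus hminus
  exact add_le_add hplus hminus

theorem opSemiNorm_secondDiff_le (hA : A.IsPositive) {g : ℝ → V} (hg : ContDiff ℝ 2 g)
    (t : ℝ) {h : ℝ} (hh : 0 ≤ h) :
    opSemiNorm A (g (t + h) - (2 : ℝ) • g t + g (t - h)) ≤
      h * ∫ s in t - h..t + h, opSemiNorm A (iteratedDeriv 2 g s) := by
  have hsplit : g (t + h) - (2 : ℝ) • g t + g (t - h) =
      (g (t + h) - taylorWithinEval g 1 Set.univ t (t + h)) +
        (g (t - h) - taylorWithinEval g 1 Set.univ t (t - h)) := by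
    simp only [taylor_within_apply, Finset.sum_range_succ, Finset.sum_range_zero,
      iteratedDerivWithin_univ, iteratedDeriv_zero, add_sub_cancel_left, sub_sub_cancel_left,
      Nat.factorial, Nat.cast_one, Nat.cast_mul]
    module
  rw [hsplit]
  simpa using (opSemiNorm_add_le hA _ _).trans (opSemiNorm_taylor_remainders_le hA (n := 1) hg t hh)

theorem opSemiNorm_secondDiff_sub_le (hA : A.IsPositive) {g : ℝ → V} (hg : ContDiff ℝ 4 g)
    (t : ℝ) {h : ℝ} (hh : 0 ≤ h) :
    opSemiNorm A (g (t + h) - (2 : ℝ) • g t + g (t - h) - h ^ 2 • iteratedDeriv 2 g t) ≤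
      h ^ 3 / 6 * ∫ s in t - h..t + h, opSemiNorm A (iteratedDeriv 4 g s) := by
  have hsplit : g (t + h) - (2 : ℝ) • g t + g (t - h) - h ^ 2 • iteratedDeriv 2 g t =
      (g (t + h) - taylorWithinEval g 3 Set.univ t (t + h)) +
        (g (t - h) - taylorWithinEval g 3 Set.univ t (t - h)) := by
    simp only [taylor_within_apply, Finset.sum_range_succ, Finset.sum_range_zero,
      iteratedDerivWithin_univ, iteratedDeriv_zero, add_sub_cancel_left, sub_sub_cancel_left,
      Nat.factorial, Nat.cast_one, Nat.cast_mul]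
    module
  rw [hsplit]
  refine ((opSemiNorm_add_le hA _ _).trans
    (opSemiNorm_taylor_remainders_le hA (n := 3) hg t hh)).trans_eq ?_
  norm_num [Nat.factorial]

theorem opSemiNorm_centralDiff_sub_le (hA : A.IsPositive) {g : ℝ → V} (hg : ContDiff ℝ 3 g)
    (t : ℝ) {h : ℝ} (hh : 0 ≤ h) :
    opSemiNorm A (g (t + h) - g (t - h) - (2 * h) • iteratedDeriv 1 g t) ≤
      h ^ 2 / 2 * ∫ s in t - h..t + h, opSemiNorm A (iteratedDeriv 3 g s) := by
  have hsplit : g (t + h) - g (t - h) - (2 * h) • iteratedDeriv 1 g t =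
      (g (t + h) - taylorWithinEval g 2 Set.univ t (t + h)) -
        (g (t - h) - taylorWithinEval g 2 Set.univ t (t - h)) := by
    simp only [taylor_within_apply, Finset.sum_range_succ, Finset.sum_range_zero,
      iteratedDerivWithin_univ, iteratedDeriv_zero, add_sub_cancel_left, sub_sub_cancel_left,
      Nat.factorial, Nat.cast_one, Nat.cast_mul]
    module
  rw [hsplit]
  refine ((opSemiNorm_sub_le hA _ _).trans
    (opSemiNorm_taylor_remainders_le hA (n := 2) hg t hh)).trans_eq ?_
  norm_num [Nat.factorial]

theorem opSemiNorm_sub_le_mul_of_forall_le (hA : A.IsPositive) {g : ℝ → V} (hg : ContDiff ℝ 1 g)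
    {a b B : ℝ} (hab : a ≤ b) (hB : ∀ s ∈ Set.Icc a b, opSemiNorm A (iteratedDeriv 1 g s) ≤ B) :
    opSemiNorm A (g b - g a) ≤ (b - a) * B := by
  have h := opSemiNorm_sub_taylorWithinEval_le hA (n := 0) (by simpa using hg) a (b - a)
  rw [add_sub_cancel, abs_of_nonneg (integral_nonneg (by linarith) fun s _ =>
    opSemiNorm_nonneg _ _)] at h
  simp only [taylor_within_zero_eval, pow_zero, Nat.factorial_zero, Nat.cast_one, div_one,
    one_mul, zero_add] at h
  exact h.trans (integral_le_mul_of_forall_le hab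
    ((continuous_opSemiNorm A).comp (hg.continuous_iteratedDeriv 1 le_rfl)) hB)

theorem opSemiNorm_secondDiff_comp_le (hA : A.IsPositive) (L : V →L[ℝ] V) {u : ℝ → V}
    (hu : ContDiff ℝ 2 u) (t : ℝ) {h c : ℝ} (hh : 0 ≤ h)
    (hc : ∀ s ∈ Set.Icc (t - h) (t + h), opSemiNorm A (L (iteratedDeriv 2 u s)) ≤ c) :
    opSemiNorm A (L (u (t + h)) - (2 : ℝ) • L (u t) + L (u (t - h))) ≤ 2 * h ^ 2 * c := by
  have hsd := opSemiNorm_secondDiff_le hA (L.contDiff.comp hu) t hh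
  simp only [Function.comp_def, L.iteratedDeriv_comp_left hu le_rfl] at hsd
  have hint := integral_le_mul_of_forall_le (by linarith) (by fun_prop) hc
  calc _ ≤ h * ((t + h - (t - h)) * c) := hsd.trans (mul_le_mul_of_nonneg_left hint hh)
    _ = 2 * h ^ 2 * c := by ring

theorem opSemiNorm_midpoint_le (hA : A.IsPositive) {g : ℝ → V} (hg : ContDiff ℝ 3 g)
    {t h b : ℝ} (hh : 0 ≤ h)
    (hb : ∀ s ∈ Set.Icc t (t + h), opSemiNorm A (iteratedDeriv 3 g s) ≤ b) :
    opSemiNorm A (g (t + h) - g t - h • iteratedDeriv 1 g (t + h / 2)) ≤ h ^ 3 / 8 * b := by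
  have hcentral := opSemiNorm_centralDiff_sub_le hA hg (t + h / 2) (h := h / 2) (by positivity)
  rw [show t + h / 2 + h / 2 = t + h by ring, show t + h / 2 - h / 2 = t by ring,
    show 2 * (h / 2) = h by ring] at hcentral
  have hint := integral_le_mul_of_forall_le (by linarith) (by fun_prop) hb
  calc _ ≤ (h / 2) ^ 2 / 2 * ((t + h - t) * b) :=
        hcentral.trans (mul_le_mul_of_nonneg_left hint (by positivity))
    _ = h ^ 3 / 8 * b := by ring

end Calculus

section Scheme

variable {V : Type*} [NormedAddCommGroup V] [InnerProductSpace ℝ V] {M K : V →ₗ[ℝ] V}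

-- `x`, `y`, `z` stand for consecutive iterates `U (n - 1)`, `U n`, `U (n + 1)`.
noncomputable def discreteWaveOperator (M K : V →ₗ[ℝ] V) (τ : ℝ) (x y z : V) : V :=
  M ((τ ^ 2)⁻¹ • (z - (2 : ℝ) • y + x)) + K ((4 : ℝ)⁻¹ • (z + (2 : ℝ) • y + x))

theorem discreteWaveOperator_sub (M K : V →ₗ[ℝ] V) (τ : ℝ) (x y z x' y' z' : V) :
    discreteWaveOperator M K τ (x - x') (y - y') (z - z') =
      discreteWaveOperator M K τ x y z - discreteWaveOperator M K τ x' y' z' := by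
  simp only [discreteWaveOperator, map_add, map_sub, map_smul]
  module

noncomputable def discreteEnergy (M K : V →ₗ[ℝ] V) (τ : ℝ) (x y : V) : ℝ :=
  √(opSemiNorm M (τ⁻¹ • (y - x)) ^ 2 + opSemiNorm K ((2 : ℝ)⁻¹ • (y + x)) ^ 2)

theorem discreteEnergy_nonneg (M K : V →ₗ[ℝ] V) (τ : ℝ) (x y : V) :
    0 ≤ discreteEnergy M K τ x y :=
  Real.sqrt_nonneg _

theorem opSemiNorm_le_discreteEnergy (τ : ℝ) (x y : V) :
    opSemiNorm M (τ⁻¹ • (y - x)) ≤ discreteEnergy M K τ x y :=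
  Real.le_sqrt_of_sq_le (le_add_of_nonneg_right (sq_nonneg _))

theorem discreteEnergy_le_opSemiNorm_add_opSemiNorm (τ : ℝ) (x y : V) :
    discreteEnergy M K τ x y ≤
      opSemiNorm M (τ⁻¹ • (y - x)) + opSemiNorm K ((2 : ℝ)⁻¹ • (y + x)) := by
  have := opSemiNorm_nonneg M (τ⁻¹ • (y - x))
  have := opSemiNorm_nonneg K ((2 : ℝ)⁻¹ • (y + x))
  rw [discreteEnergy, Real.sqrt_le_iff]
  constructor <;> nlinarith

theorem inner_discreteWaveOperator_sub_eq (hM : M.IsPositive) (hK : K.IsPositive) (τ : ℝ)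
    (x y z : V) :
    ⟪discreteWaveOperator M K τ x y z, z - x⟫ =
      discreteEnergy M K τ y z ^ 2 - discreteEnergy M K τ x y ^ 2 := by
  have hE : ∀ a b : V, discreteEnergy M K τ a b ^ 2 =
      (τ ^ 2)⁻¹ * ⟪M (b - a), b - a⟫ + (4 : ℝ)⁻¹ * ⟪K (b + a), b + a⟫ := fun a b => by
    rw [discreteEnergy, Real.sq_sqrt (by positivity), opSemiNorm_smul, opSemiNorm_smul, mul_pow,
      mul_pow, sq_abs, sq_abs, sq_opSemiNorm hM, sq_opSemiNorm hK]
    norm_num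
  have hMid : ⟪M (z - (2 : ℝ) • y + x), z - x⟫ = ⟪M (z - y), z - y⟫ - ⟪M (y - x), y - x⟫ := by
    rw [hM.isSymmetric, real_inner_comm, show z - (2 : ℝ) • y + x = z - y - (y - x) by module,
      show z - x = z - y + (y - x) by abel, hM.isSymmetric.inner_map_add_sub]
  have hKid : ⟪K (z + (2 : ℝ) • y + x), z - x⟫ = ⟪K (z + y), z + y⟫ - ⟪K (y + x), y + x⟫ := by
    rw [show z + (2 : ℝ) • y + x = z + y + (y + x) by module,
      show z - x = z + y - (y + x) by abel, hK.isSymmetric.inner_map_add_sub]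
  rw [hE, hE, discreteWaveOperator, inner_add_left, map_smul, map_smul, real_inner_smul_left,
    real_inner_smul_left, hMid, hKid]
  ring

theorem discreteEnergy_le_add_of_inner_eq (hM : M.IsPositive) (hK : K.IsPositive) {τ : ℝ}
    (hτ : 0 < τ) {x y z g : V} (h : ⟪discreteWaveOperator M K τ x y z, z - x⟫ = -⟪M g, z - x⟫) :
    discreteEnergy M K τ y z ≤ discreteEnergy M K τ x y + τ * opSemiNorm M g := by
  have hscale : ∀ w : V, opSemiNorm M w = τ * opSemiNorm M (τ⁻¹ • w) := fun w => by
    rw [opSemiNorm_smul, abs_of_pos (inv_pos.2 hτ), mul_inv_cancel_left₀ hτ.ne']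
  refine le_add_of_sq_sub_sq_le_mul_add (discreteEnergy_nonneg _ _ _ _ _)
    (mul_nonneg hτ.le (opSemiNorm_nonneg _ _)) ?_
  rw [← inner_discreteWaveOperator_sub_eq hM hK, h, ← inner_neg_right]
  calc ⟪M g, -(z - x)⟫ ≤ opSemiNorm M g * opSemiNorm M (-(z - x)) :=
        inner_le_opSemiNorm_mul_opSemiNorm hM _ _
    _ ≤ opSemiNorm M g * (opSemiNorm M (z - y) + opSemiNorm M (y - x)) := by
        rw [opSemiNorm_neg, show z - x = z - y + (y - x) by abel]
        exact mul_le_mul_of_nonneg_left (opSemiNorm_add_le hM _ _) (opSemiNorm_nonneg _ _)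
    _ ≤ τ * opSemiNorm M g * (discreteEnergy M K τ y z + discreteEnergy M K τ x y) := by
        rw [hscale (z - y), hscale (y - x), ← mul_add, mul_left_comm, ← mul_assoc]
        exact mul_le_mul_of_nonneg_left (add_le_add (opSemiNorm_le_discreteEnergy τ y z)
          (opSemiNorm_le_discreteEnergy τ x y)) (mul_nonneg hτ.le (opSemiNorm_nonneg _ _))

theorem discreteEnergy_le_add_sum_of_inner_eq (hM : M.IsPositive) (hK : K.IsPositive) {τ : ℝ}
    (hτ : 0 < τ) {e g : ℕ → V} {n : ℕ}
    (h : ∀ m < n, ⟪discreteWaveOperator M K τ (e m) (e (m + 1)) (e (m + 2)), e (m + 2) - e m⟫ =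
      -⟪M (g m), e (m + 2) - e m⟫) :
    discreteEnergy M K τ (e n) (e (n + 1)) ≤
      discreteEnergy M K τ (e 0) (e 1) + τ * ∑ m ∈ Finset.range n, opSemiNorm M (g m) := by
  induction n with
  | zero => simp
  | succ n ih =>
    have hstep := discreteEnergy_le_add_of_inner_eq hM hK hτ (h n n.lt_succ_self)
    rw [Finset.sum_range_succ, mul_add]
    linarith [ih fun m hm => h m (hm.trans n.lt_succ_self)]

end Scheme

section ErrorEquation

variable {V : Type*} [NormedAddCommGroup V] [InnerProductSpace ℝ V]
  {M K R : V →ₗ[ℝ] V} {u f : ℝ → V} {τ t : ℝ}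

/-- The defect of `R ∘ u` in the scheme at time `t`, with `K u` replaced by `M (f - u'')`
through the equation. -/
noncomputable def consistencyError (R : V →ₗ[ℝ] V) (u f : ℝ → V) (τ t : ℝ) : V :=
  (τ ^ 2)⁻¹ • (R (u (t + τ)) - (2 : ℝ) • R (u t) + R (u (t - τ))) +
    (4 : ℝ)⁻¹ • (f (t + τ) - iteratedDeriv 2 u (t + τ) + (2 : ℝ) • (f t - iteratedDeriv 2 u t) +
      (f (t - τ) - iteratedDeriv 2 u (t - τ))) - f t

theorem inner_discreteWaveOperator_sub_ritz {S : Submodule ℝ V}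
    (hGal : ∀ v, ∀ s ∈ S, ⟪K (R v - v), s⟫ = 0) (hτ : 0 ≤ τ)
    (hPDE : ∀ s ∈ Set.Icc (t - τ) (t + τ), M (iteratedDeriv 2 u s) + K (u s) = M (f s))
    {x y z : V} (hscheme : ∀ v ∈ S, ⟪discreteWaveOperator M K τ x y z - M (f t), v⟫ = 0)
    {v : V} (hv : v ∈ S) :
    ⟪discreteWaveOperator M K τ (x - R (u (t - τ))) (y - R (u t)) (z - R (u (t + τ))), v⟫ =
      -⟪M (consistencyError R u f τ t), v⟫ := by
  have hKu : ∀ s ∈ Set.Icc (t - τ) (t + τ), K (u s) = M (f s) - M (iteratedDeriv 2 u s) :=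
    fun s hs => by rw [← hPDE s hs, add_sub_cancel_left]
  set w := (4 : ℝ)⁻¹ • (u (t + τ) + (2 : ℝ) • u t + u (t - τ))
  have hRu : discreteWaveOperator M K τ (R (u (t - τ))) (R (u t)) (R (u (t + τ))) =
      M (consistencyError R u f τ t) + M (f t) + K (R w - w) := by
    simp only [discreteWaveOperator, consistencyError, w, map_add, map_sub, map_smul,
      hKu t ⟨by linarith, by linarith⟩, hKu (t + τ) ⟨by linarith, le_rfl⟩,
      hKu (t - τ) ⟨le_rfl, by linarith⟩]
    module
  have hx := hscheme v hv
  rw [inner_sub_left] at hx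
  rw [discreteWaveOperator_sub, hRu, inner_sub_left, inner_add_left, inner_add_left, hGal w v hv]
  linarith

end ErrorEquation

section Galerkin

variable {V : Type*} [NormedAddCommGroup V] [InnerProductSpace ℝ V] [FiniteDimensional ℝ V]
  {M K R : V →ₗ[ℝ] V} {u f : ℝ → V} {τ t : ℝ}

theorem opSemiNorm_consistencyError_le (hM : M.IsPositive) (hu : ContDiff ℝ 4 u)
    (hf : ContDiff ℝ 2 f) (hτ : 0 < τ) {c : ℝ}
    (hRitz : ∀ s ∈ Set.Icc (t - τ) (t + τ),
      opSemiNorm M (R (iteratedDeriv 2 u s) - iteratedDeriv 2 u s) ≤ c) :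
    opSemiNorm M (consistencyError R u f τ t) ≤
      5 * τ / 12 * (∫ s in t - τ..t + τ, opSemiNorm M (iteratedDeriv 4 u s)) +
        τ / 4 * (∫ s in t - τ..t + τ, opSemiNorm M (iteratedDeriv 2 f s)) + 2 * c := by
  set L := LinearMap.toContinuousLinearMap (R - LinearMap.id)
  have hL : ∀ v, L v = R v - v := fun v => rfl
  have hdecomp : consistencyError R u f τ t =
      (τ ^ 2)⁻¹ • (u (t + τ) - (2 : ℝ) • u t + u (t - τ) - τ ^ 2 • iteratedDeriv 2 u t) +
        (τ ^ 2)⁻¹ • (L (u (t + τ)) - (2 : ℝ) • L (u t) + L (u (t - τ))) +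
        (4 : ℝ)⁻¹ • (f (t + τ) - (2 : ℝ) • f t + f (t - τ)) -
        (4 : ℝ)⁻¹ • (iteratedDeriv 2 u (t + τ) - (2 : ℝ) • iteratedDeriv 2 u t +
          iteratedDeriv 2 u (t - τ)) := by
    simp only [consistencyError, hL]
    match_scalars <;> field_simp <;> ring
  have hτ2 : 0 < (τ ^ 2)⁻¹ := by positivity
  have hsmooth : opSemiNorm M ((τ ^ 2)⁻¹ •
      (u (t + τ) - (2 : ℝ) • u t + u (t - τ) - τ ^ 2 • iteratedDeriv 2 u t)) ≤
      τ / 6 * ∫ s in t - τ..t + τ, opSemiNorm M (iteratedDeriv 4 u s) := by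
    rw [opSemiNorm_smul, abs_of_pos hτ2]
    calc _ ≤ (τ ^ 2)⁻¹ * (τ ^ 3 / 6 * ∫ s in t - τ..t + τ, opSemiNorm M (iteratedDeriv 4 u s)) :=
          mul_le_mul_of_nonneg_left (opSemiNorm_secondDiff_sub_le hM hu t hτ.le) hτ2.le
      _ = _ := by field_simp
  have hritz : opSemiNorm M ((τ ^ 2)⁻¹ • (L (u (t + τ)) - (2 : ℝ) • L (u t) + L (u (t - τ)))) ≤
      2 * c := by
    rw [opSemiNorm_smul, abs_of_pos hτ2]
    calc _ ≤ (τ ^ 2)⁻¹ * (2 * τ ^ 2 * c) := mul_le_mul_of_nonneg_left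
          (opSemiNorm_secondDiff_comp_le hM L (hu.of_le (by norm_num)) t hτ.le hRitz) hτ2.le
      _ = 2 * c := by field_simp
  have hsource := opSemiNorm_secondDiff_le hM hf t hτ.le
  have hacc := opSemiNorm_secondDiff_le hM (hu.iteratedDeriv_of_add (m := 2) (k := 2)) t hτ.le
  rw [iteratedDeriv_iteratedDeriv] at hacc
  rw [hdecomp]
  refine (opSemiNorm_sub_le hM _ _).trans ?_
  refine (add_le_add_left ((opSemiNorm_add_le hM _ _).trans
    (add_le_add_left (opSemiNorm_add_le hM _ _) _)) _).trans ?_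
  rw [opSemiNorm_smul _ (4 : ℝ)⁻¹, opSemiNorm_smul _ (4 : ℝ)⁻¹,
    abs_of_pos (by norm_num : (0 : ℝ) < 4⁻¹)]
  linarith

theorem sum_opSemiNorm_consistencyError_le (hM : M.IsPositive) (hu : ContDiff ℝ 4 u)
    (hf : ContDiff ℝ 2 f) (hτ : 0 < τ) {T c : ℝ}
    (hRitz : ∀ t ∈ Set.Icc 0 T,
      opSemiNorm M (R (iteratedDeriv 2 u t) - iteratedDeriv 2 u t) ≤ c)
    {n : ℕ} (hnT : (n + 1) * τ ≤ T) :
    τ * ∑ m ∈ Finset.range n, opSemiNorm M (consistencyError R u f τ (((m + 1 : ℕ) : ℝ) * τ)) ≤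
      τ ^ 2 * (5 / 6 * (∫ s in (0 : ℝ)..T, opSemiNorm M (iteratedDeriv 4 u s)) +
        1 / 2 * ∫ s in (0 : ℝ)..T, opSemiNorm M (iteratedDeriv 2 f s)) + 2 * T * c := by
  have hsum := Finset.sum_le_sum fun m (hm : m ∈ Finset.range n) =>
    opSemiNorm_consistencyError_le hM hu hf hτ (R := R) (c := c) fun s hs =>
      hRitz s (Icc_window_subset_Icc hτ.le (Finset.mem_range.1 hm) hnT hs)
  rw [Finset.sum_add_distrib, Finset.sum_add_distrib, ← Finset.mul_sum, ← Finset.mul_sum,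
    Finset.sum_const, Finset.card_range, nsmul_eq_mul] at hsum
  have h4 := sum_integral_two_steps_le (φ := fun s => opSemiNorm M (iteratedDeriv 4 u s))
    (by fun_prop) (fun s => opSemiNorm_nonneg _ _) hτ.le hnT
  have h2 := sum_integral_two_steps_le (φ := fun s => opSemiNorm M (iteratedDeriv 2 f s))
    (by fun_prop) (fun s => opSemiNorm_nonneg _ _) hτ.le hnT
  have hc : 0 ≤ c := (opSemiNorm_nonneg _ _).trans (hRitz 0 ⟨le_rfl, by nlinarith⟩)
  have hnτ : (n : ℝ) * τ ≤ T := by nlinarith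
  nlinarith [mul_le_mul_of_nonneg_left h4 (sq_nonneg τ), mul_le_mul_of_nonneg_left h2 (sq_nonneg τ),
    mul_le_mul_of_nonneg_left hsum hτ.le, mul_le_mul_of_nonneg_right hnτ hc]

theorem discreteEnergy_sub_ritz_le {S : Submodule ℝ V} (hM : M.IsPositive) (hK : K.IsPositive)
    (hRS : ∀ v, R v ∈ S) (hGal : ∀ v, ∀ s ∈ S, ⟪K (R v - v), s⟫ = 0) (hτ : 0 < τ)
    (hu : ContDiff ℝ 4 u) (hf : ContDiff ℝ 2 f) {T : ℝ}
    (hPDE : ∀ t ∈ Set.Icc 0 T, M (iteratedDeriv 2 u t) + K (u t) = M (f t)) {c : ℝ}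
    (hRitz : ∀ t ∈ Set.Icc 0 T,
      opSemiNorm M (R (iteratedDeriv 2 u t) - iteratedDeriv 2 u t) ≤ c)
    {U : ℕ → V} (hUS : ∀ m, U m ∈ S) {n : ℕ} (hnT : (n + 1) * τ ≤ T)
    (hscheme : ∀ m, 1 ≤ m → m ≤ n → ∀ v ∈ S,
      ⟪M ((τ ^ 2)⁻¹ • (U (m + 1) - (2 : ℝ) • U m + U (m - 1))) +
        K ((4 : ℝ)⁻¹ • (U (m + 1) + (2 : ℝ) • U m + U (m - 1))) - M (f (m * τ)), v⟫ = 0) :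
    discreteEnergy M K τ (U n - R (u (n * τ))) (U (n + 1) - R (u ((n + 1 : ℕ) * τ))) ≤
      opSemiNorm M (τ⁻¹ • (U 1 - U 0) - R (τ⁻¹ • (u τ - u 0))) +
        opSemiNorm K ((2 : ℝ)⁻¹ • (U 1 + U 0) - R ((2 : ℝ)⁻¹ • (u τ + u 0))) +
        τ ^ 2 * (5 / 6 * (∫ s in (0 : ℝ)..T, opSemiNorm M (iteratedDeriv 4 u s)) +
          1 / 2 * ∫ s in (0 : ℝ)..T, opSemiNorm M (iteratedDeriv 2 f s)) + 2 * T * c := by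
  set e : ℕ → V := fun m => U m - R (u (m * τ))
  have herr : ∀ m < n,
      ⟪discreteWaveOperator M K τ (e m) (e (m + 1)) (e (m + 2)), e (m + 2) - e m⟫ =
        -⟪M (consistencyError R u f τ (((m + 1 : ℕ) : ℝ) * τ)), e (m + 2) - e m⟫ := by
    intro m hm
    have h := inner_discreteWaveOperator_sub_ritz hGal hτ.le
      (fun s hs => hPDE s (Icc_window_subset_Icc hτ.le hm hnT hs))
      (x := U m) (y := U (m + 1)) (z := U (m + 2))
      (fun v hv => by
        have h := hscheme (m + 1) le_add_self hm v hv
        rw [add_tsub_cancel_right] at h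
        exact h)
      (v := e (m + 2) - e m)
      (S.sub_mem (S.sub_mem (hUS _) (hRS _)) (S.sub_mem (hUS _) (hRS _)))
    rwa [show ((m + 1 : ℕ) : ℝ) * τ - τ = m * τ by push_cast; ring,
      show ((m + 1 : ℕ) : ℝ) * τ + τ = ((m + 2 : ℕ) : ℝ) * τ by push_cast; ring] at h
  have hE0 : discreteEnergy M K τ (e 0) (e 1) ≤
      opSemiNorm M (τ⁻¹ • (U 1 - U 0) - R (τ⁻¹ • (u τ - u 0))) +
        opSemiNorm K ((2 : ℝ)⁻¹ • (U 1 + U 0) - R ((2 : ℝ)⁻¹ • (u τ + u 0))) := by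
    refine (discreteEnergy_le_opSemiNorm_add_opSemiNorm τ _ _).trans_eq ?_
    simp only [e, map_smul, map_sub, map_add, Nat.cast_zero, Nat.cast_one, zero_mul, one_mul]
    congr 2 <;> module
  linarith [discreteEnergy_le_add_sum_of_inner_eq hM hK hτ herr,
    sum_opSemiNorm_consistencyError_le hM hu hf hτ hRitz hnT]

theorem opSemiNorm_discreteDeriv_sub_le {S : Submodule ℝ V} (hM : M.IsPositive)
    (hK : K.IsPositive) (hRS : ∀ v, R v ∈ S) (hGal : ∀ v, ∀ s ∈ S, ⟪K (R v - v), s⟫ = 0)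
    (hτ : 0 < τ) (hu : ContDiff ℝ 4 u) (hf : ContDiff ℝ 2 f) {T : ℝ}
    (hPDE : ∀ t ∈ Set.Icc 0 T, M (iteratedDeriv 2 u t) + K (u t) = M (f t)) {c₁ c₂ b₃ : ℝ}
    (hRitz₁ : ∀ t ∈ Set.Icc 0 T,
      opSemiNorm M (R (iteratedDeriv 1 u t) - iteratedDeriv 1 u t) ≤ c₁)
    (hRitz₂ : ∀ t ∈ Set.Icc 0 T,
      opSemiNorm M (R (iteratedDeriv 2 u t) - iteratedDeriv 2 u t) ≤ c₂)
    (hu₃ : ∀ t ∈ Set.Icc 0 T, opSemiNorm M (iteratedDeriv 3 u t) ≤ b₃)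
    {U : ℕ → V} (hUS : ∀ m, U m ∈ S) {n : ℕ} (hnT : (n + 1) * τ ≤ T)
    (hscheme : ∀ m, 1 ≤ m → m ≤ n → ∀ v ∈ S,
      ⟪M ((τ ^ 2)⁻¹ • (U (m + 1) - (2 : ℝ) • U m + U (m - 1))) +
        K ((4 : ℝ)⁻¹ • (U (m + 1) + (2 : ℝ) • U m + U (m - 1))) - M (f (m * τ)), v⟫ = 0) :
    opSemiNorm M (τ⁻¹ • (U (n + 1) - U n) - iteratedDeriv 1 u (n * τ + τ / 2)) ≤
      opSemiNorm M (τ⁻¹ • (U 1 - U 0) - R (τ⁻¹ • (u τ - u 0))) +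
        opSemiNorm K ((2 : ℝ)⁻¹ • (U 1 + U 0) - R ((2 : ℝ)⁻¹ • (u τ + u 0))) +
        τ ^ 2 * (5 / 6 * (∫ s in (0 : ℝ)..T, opSemiNorm M (iteratedDeriv 4 u s)) +
          1 / 2 * ∫ s in (0 : ℝ)..T, opSemiNorm M (iteratedDeriv 2 f s)) + 2 * T * c₂ +
        c₁ + τ ^ 2 / 8 * b₃ := by
  set t : ℝ := n * τ
  set L := LinearMap.toContinuousLinearMap (R - LinearMap.id)
  have hstep : Set.Icc t (t + τ) ⊆ Set.Icc 0 T := fun s hs =>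
    ⟨(by positivity : 0 ≤ t).trans hs.1, by linarith [hs.2]⟩
  have hdecomp : τ⁻¹ • (U (n + 1) - U n) - iteratedDeriv 1 u (t + τ / 2) =
      τ⁻¹ • ((U (n + 1) - R (u ((n + 1 : ℕ) * τ))) - (U n - R (u t))) +
        τ⁻¹ • (L (u (t + τ)) - L (u t)) +
        τ⁻¹ • (u (t + τ) - u t - τ • iteratedDeriv 1 u (t + τ / 2)) := by
    rw [show ((n + 1 : ℕ) : ℝ) * τ = t + τ by push_cast; ring]
    simp only [L, LinearMap.coe_toContinuousLinearMap', LinearMap.sub_apply, LinearMap.id_apply]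
    match_scalars <;> simp [hτ.ne']
  have hdiscrete := (opSemiNorm_le_discreteEnergy τ _ _).trans
    (discreteEnergy_sub_ritz_le hM hK hRS hGal hτ hu hf hPDE hRitz₂ hUS hnT hscheme)
  have hritz : τ⁻¹ * opSemiNorm M (L (u (t + τ)) - L (u t)) ≤ c₁ := by
    refine (inv_mul_le_iff₀ hτ).2 ((opSemiNorm_sub_le_mul_of_forall_le (B := c₁) hM
      ((L.contDiff.comp hu).of_le (by norm_num)) (by linarith) fun s hs => ?_).trans_eq (by ring))
    rw [Function.comp_def, L.iteratedDeriv_comp_left hu (by norm_num)]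
    exact hRitz₁ s (hstep hs)
  have hmidpoint : τ⁻¹ * opSemiNorm M (u (t + τ) - u t - τ • iteratedDeriv 1 u (t + τ / 2)) ≤
      τ ^ 2 / 8 * b₃ := by
    refine (inv_mul_le_iff₀ hτ).2 ((opSemiNorm_midpoint_le hM (hu.of_le (by norm_num)) hτ.le
      fun s hs => hu₃ s (hstep hs)).trans_eq ?_)
    ring
  rw [hdecomp]
  refine (opSemiNorm_add_le hM _ _).trans ((add_le_add (opSemiNorm_add_le hM _ _) le_rfl).trans ?_)
  rw [opSemiNorm_smul _ τ⁻¹ (L _ - _), opSemiNorm_smul _ τ⁻¹ (u _ - _ - _),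
    abs_of_pos (inv_pos.2 hτ)]
  linarith

end Galerkin

/-- Theorem 5.8 of the paper: the `M`-norm error bound for the
discrete time derivative of the fully discrete Galerkin method in the multiscale
space `S`, with the localized Ritz projection abstracted into a linear map `R`;
the constant `C` depends only on `C_R`. -/
theorem stmt14 (C_R : ℝ) (hCR : 0 < C_R) :
    ∃ C : ℝ, 0 < C ∧
      ∀ (V : Type) [NormedAddCommGroup V] [InnerProductSpace ℝ V]
        [FiniteDimensional ℝ V]
        (M K : V →ₗ[ℝ] V),
        (∀ x y : V, ⟪M x, y⟫ = ⟪x, M y⟫) →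
        (∀ x : V, x ≠ 0 → 0 < ⟪M x, x⟫) →
        (∀ x y : V, ⟪K x, y⟫ = ⟪x, K y⟫) →
        (∀ x : V, 0 ≤ ⟪K x, x⟫) →
        ∀ (S : Submodule ℝ V) (R : V →ₗ[ℝ] V),
        (∀ v : V, R v ∈ S) →
        (∀ v : V, ∀ s ∈ S, ⟪K (R v - v), s⟫ = 0) →
        ∀ (T : ℝ) (N : ℕ), 0 < T → 2 ≤ N →
        ∀ (H : ℝ), 0 < H →
        ∀ f u : ℝ → V, ContDiff ℝ 2 f → ContDiff ℝ 4 u →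
        (∀ t ∈ Set.Icc (0 : ℝ) T,
          M (iteratedDeriv 2 u t) + K (u t) = M (f t)) →
        (∀ t ∈ Set.Icc (0 : ℝ) T,
          opSemiNorm K (R (u t) - u t) ≤
            C_R * H * (opSemiNorm M (f t - iteratedDeriv 2 u t) + opSemiNorm K (u t))) →
        (∀ t ∈ Set.Icc (0 : ℝ) T,
          opSemiNorm M (R (iteratedDeriv 2 u t) - iteratedDeriv 2 u t) ≤
            C_R * H * opSemiNorm K (iteratedDeriv 2 u t)) →
        (∀ t ∈ Set.Icc (0 : ℝ) T,
          opSemiNorm M (R (iteratedDeriv 1 u t) - iteratedDeriv 1 u t) ≤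
            C_R * H * opSemiNorm K (iteratedDeriv 1 u t)) →
        ∀ U : ℕ → V, (∀ n, U n ∈ S) →
        (∀ n : ℕ, 1 ≤ n → n ≤ N - 1 → ∀ v ∈ S,
          ⟪M (((T / N) ^ 2)⁻¹ • (U (n + 1) - (2 : ℝ) • U n + U (n - 1))) +
              K ((4 : ℝ)⁻¹ • (U (n + 1) + (2 : ℝ) • U n + U (n - 1))) -
              M (f (n * (T / N))), v⟫ = 0) →
        ∀ n : ℕ, 1 ≤ n → n ≤ N - 1 →
          opSemiNorm M
              ((T / N)⁻¹ • (U (n + 1) - U n) -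
                iteratedDeriv 1 u (n * (T / N) + (T / N) / 2)) ≤
            C * (opSemiNorm M
                  ((T / N)⁻¹ • (U 1 - U 0) - R ((T / N)⁻¹ • (u (T / N) - u 0))) +
                opSemiNorm K
                  ((2 : ℝ)⁻¹ • (U 1 + U 0) - R ((2 : ℝ)⁻¹ • (u (T / N) + u 0))) +
                (T / N) ^ 2 *
                  ((∫ s in (0 : ℝ)..T, opSemiNorm M (iteratedDeriv 4 u s)) +
                    (∫ s in (0 : ℝ)..T, opSemiNorm M (iteratedDeriv 2 f s)) +
                    H * (∫ s in (0 : ℝ)..T, opSemiNorm K (iteratedDeriv 2 u s)) +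
                    ⨆ t : Set.Icc (0 : ℝ) T, opSemiNorm M (iteratedDeriv 3 u t)) +
                H * ((T + T / N) *
                    (⨆ t : Set.Icc (0 : ℝ) T, opSemiNorm K (iteratedDeriv 2 u t)) +
                  ⨆ t : Set.Icc (0 : ℝ) T, opSemiNorm K (iteratedDeriv 1 u t))) := by
  refine ⟨2 * C_R + 2, by positivity, ?_⟩
  intro V _ _ _ M K hMsym hMpos hKsym hKpos S R hRS hGal T N hT hN H hH f u hf hu hPDE _ hRitz₂
    hRitz₁ U hUS hscheme n _ hnN
  have hM : M.IsPositive := M.isPositive_iff.2 ⟨hMsym, fun x =>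
    (eq_or_ne x 0).elim (fun hx => by simp [hx]) fun hx => (hMpos x hx).le⟩
  have hK : K.IsPositive := K.isPositive_iff.2 ⟨hKsym, hKpos⟩
  have hNpos : (0 : ℝ) < N := by positivity
  set τ := T / N
  have hτ : 0 < τ := div_pos hT hNpos
  have hnT : (n + 1) * τ ≤ T := by
    rw [mul_div_assoc', div_le_iff₀ hNpos]
    have : (n : ℝ) + 1 ≤ N := by exact_mod_cast (show n + 1 ≤ N by omega)
    nlinarith
  have hsup : ∀ (A : V →ₗ[ℝ] V) (k : ℕ), k ≤ 4 → ∀ t ∈ Set.Icc 0 T,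
      opSemiNorm A (iteratedDeriv k u t) ≤ ⨆ s : Set.Icc 0 T, opSemiNorm A (iteratedDeriv k u s) :=
    fun A k hk t ht => le_ciSup_Icc_of_continuous
      ((continuous_opSemiNorm A).comp (hu.continuous_iteratedDeriv k (by exact_mod_cast hk))) ht
  have hRitz₁' : ∀ t ∈ Set.Icc 0 T,
      opSemiNorm M (R (iteratedDeriv 1 u t) - iteratedDeriv 1 u t) ≤
        C_R * H * ⨆ s : Set.Icc 0 T, opSemiNorm K (iteratedDeriv 1 u s) :=
    fun t ht => (hRitz₁ t ht).trans (by gcongr; exact hsup K 1 (by norm_num) t ht)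
  have hRitz₂' : ∀ t ∈ Set.Icc 0 T,
      opSemiNorm M (R (iteratedDeriv 2 u t) - iteratedDeriv 2 u t) ≤
        C_R * H * ⨆ s : Set.Icc 0 T, opSemiNorm K (iteratedDeriv 2 u s) :=
    fun t ht => (hRitz₂ t ht).trans (by gcongr; exact hsup K 2 (by norm_num) t ht)
  refine (opSemiNorm_discreteDeriv_sub_le hM hK hRS hGal hτ hu hf hPDE hRitz₁' hRitz₂'
    (hsup M 3 (by norm_num)) hUS hnT fun m h1 h2 => hscheme m h1 (h2.trans hnN)).trans ?_
  have hB₁ := Real.iSup_nonneg fun s : Set.Icc 0 T => opSemiNorm_nonneg K (iteratedDeriv 1 u s)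
  have hB₂ := Real.iSup_nonneg fun s : Set.Icc 0 T => opSemiNorm_nonneg K (iteratedDeriv 2 u s)
  have hB₃ := Real.iSup_nonneg fun s : Set.Icc 0 T => opSemiNorm_nonneg M (iteratedDeriv 3 u s)
  have hI₄ := integral_nonneg (μ := volume) hT.le fun s _ =>
    opSemiNorm_nonneg M (iteratedDeriv 4 u s)
  have hI_f := integral_nonneg (μ := volume) hT.le fun s _ =>
    opSemiNorm_nonneg M (iteratedDeriv 2 f s)
  have hI₂ := integral_nonneg (μ := volume) hT.le fun s _ =>
    opSemiNorm_nonneg K (iteratedDeriv 2 u s)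
  have hX₁ := opSemiNorm_nonneg M (τ⁻¹ • (U 1 - U 0) - R (τ⁻¹ • (u τ - u 0)))
  have hX₂ := opSemiNorm_nonneg K ((2 : ℝ)⁻¹ • (U 1 + U 0) - R ((2 : ℝ)⁻¹ • (u τ + u 0)))
  rw [← sub_nonneg]
  -- `ring_nf` also rewrites the `2⁻¹` inside the atom of `hX₂`.
  ring_nf at hX₂ ⊢
  positivity
end
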